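/- Let N ≥ 2 be an integer and suppose d : ℕ → ℝ satisfies, for all n ≥ 0, the tropical multilinear equation d_{n+N+3} + 2·d_{n+N} + ∑_{j=1}^{N−1} d_{n+j} = max M_n, where M_n consists of the N+2 numbers: (i) d_{n+3} + d_{n+N} + ∑_{j=2}^{N+1} d_{n+j}; (ii) ∑_{j=1}^{N+2} d_{n+j}; (iii) d_n + d_{n+3} + ∑_{j=3}^{N+2} d_{n+j}; (iv) for each k = 1, …, N−1, d_{n+k} + d_{n+k+3} + ∑_{j=1, j≠k+1, j≠k+2}^{N+2} d_{n+j}. Then there exist real parameters A, Ā, B, C with C ≥ 0 and an integer m ≥ 0 such that d_n = (1/4)·C·n² + B·n + A + Ā·(−1)ⁿ for all n ≥ m. -/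

import Mathlib

/-!
Put `q_m = d_{m+3} - d_{m+2} - d_{m+1} + d_m`. Subtracting `∑_{j=1}^{N+2} d_{n+j}` from both sides
turns the equation into the max-plus recurrence
`q_{n+N} = max (-∑_{j=1}^{N-1} q_{n+j}, 0, q_n, q_{n+1}, …, q_{n+N-1})`.
So `q_m ≥ 0` for `m ≥ N`, and `q` is nondecreasing from `N - 1` on. Once `q` is nonnegative on a
whole window, the first branch is nonpositive and every other branch is at most `q_{n+N-1}`, so
`q` is eventually a constant `C ≥ 0`. Solving `d_{m+3} - d_{m+2} - d_{m+1} + d_m = C` gives the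
quadratic term `C n² / 4` plus the general element `A + B n + Ā (-1)ⁿ` of the kernel of
`(S - 1)²(S + 1)`, `S` the shift.
-/

open Finset

def mixedDiff (d : ℕ → ℝ) (m : ℕ) : ℝ := d (m + 3) - d (m + 2) - d (m + 1) + d m

theorem apply_eq_of_succ_eq {α : Type*} {f : ℕ → α} {m₀ : ℕ}
    (h : ∀ m ≥ m₀, f (m + 1) = f m) :
    ∀ m ≥ m₀, f m = f m₀ := by
  intro m hm
  induction m, hm using Nat.le_induction with
  | base => rfl
  | succ m hm ih => rw [h m hm, ih]

theorem exists_eq_add_mul_neg_one_pow {e : ℕ → ℝ} {m₀ : ℕ}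
    (h : ∀ m ≥ m₀, e (m + 2) = e m) :
    ∃ A Abar : ℝ, ∀ n ≥ m₀, e n = A + Abar * (-1) ^ n := by
  set mean : ℕ → ℝ := fun m => (e m + e (m + 1)) / 2
  set alt : ℕ → ℝ := fun m => (-1) ^ m * (e m - e (m + 1)) / 2
  have hmean : ∀ n ≥ m₀, mean n = mean m₀ :=
    apply_eq_of_succ_eq fun m hm => by simp only [mean, h m hm]; ring
  have halt : ∀ n ≥ m₀, alt n = alt m₀ :=
    apply_eq_of_succ_eq fun m hm => by simp only [alt, h m hm]; ring
  refine ⟨mean m₀, alt m₀, fun n hn => ?_⟩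
  have hsq : ((-1 : ℝ) ^ n) ^ 2 = 1 := by rw [← pow_mul, mul_comm, pow_mul, neg_one_sq, one_pow]
  rw [← hmean n hn, ← halt n hn]
  linear_combination (e (n + 1) - e n) / 2 * hsq

theorem exists_eq_quadratic_of_mixedDiff_eq {d : ℕ → ℝ} {c : ℝ} {m₀ : ℕ}
    (h : ∀ m ≥ m₀, mixedDiff d m = c) :
    ∃ A Abar B : ℝ, ∀ n ≥ m₀,
      d n = 1 / 4 * c * (n : ℝ) ^ 2 + B * n + A + Abar * (-1) ^ n := by
  -- `B` makes `e (m₀ + 2) = e m₀`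
  set B : ℝ := (d (m₀ + 2) - d m₀ - c * m₀ - c) / 2
  set e : ℕ → ℝ := fun n => d n - (1 / 4 * c * (n : ℝ) ^ 2 + B * n)
  have hstep : ∀ m ≥ m₀, e (m + 2) - e m = e (m₀ + 2) - e m₀ :=
    apply_eq_of_succ_eq fun m hm => by
      have hm := h m hm
      simp only [e, mixedDiff, add_assoc, Nat.reduceAdd] at hm ⊢
      push_cast
      linear_combination hm
  have hperiodic : ∀ m ≥ m₀, e (m + 2) = e m := fun m hm => by
    have := hstep m hm
    simp only [e, B] at this ⊢
    push_cast at this ⊢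
    linarith
  obtain ⟨A, Abar, hA⟩ := exists_eq_add_mul_neg_one_pow hperiodic
  refine ⟨A, Abar, B, fun n hn => ?_⟩
  have hn := hA n hn
  simp only [e] at hn
  linarith

theorem exists_eventually_eq_of_tropical_recurrence {q : ℕ → ℝ} {N : ℕ} (hN : 2 ≤ N)
    (hq : ∀ n, q (n + N) = max (-∑ j ∈ range (N - 1), q (n + j + 1))
      (max 0 (max (q n) ((range (N - 1)).sup' (nonempty_range_iff.mpr (Nat.sub_ne_zero_of_lt hN))
        fun k => q (n + k + 1))))) :
    ∃ c, 0 ≤ c ∧ ∃ m₀, ∀ m ≥ m₀, q m = c := by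
  have hnonneg : ∀ m ≥ N, 0 ≤ q m := fun m hm => by
    obtain ⟨n, rfl⟩ := Nat.exists_eq_add_of_le' hm
    exact (hq n).ge.trans' (le_max_of_le_right (le_max_left _ _))
  have hle : ∀ n, ∀ k < N, q (n + k) ≤ q (n + N) := by
    rintro n (_ | k) hk
    · exact (hq n).ge.trans' (le_max_of_le_right (le_max_of_le_right (le_max_left _ _)))
    · exact (hq n).ge.trans' (le_max_of_le_right (le_max_of_le_right (le_max_of_le_right
        (le_sup' (fun k => q (n + k + 1)) (mem_range.mpr (by omega))))))
  have hmono : MonotoneOn q (Set.Ici (N - 1)) := by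
    refine monotoneOn_nat_Ici_of_le_succ fun m hm => ?_
    obtain ⟨n, rfl⟩ := Nat.exists_eq_add_of_le' (Set.mem_Ici.mp hm)
    simpa [show n + (N - 1) + 1 = n + N by omega] using hle n (N - 1) (by omega)
  have hsucc : ∀ m ≥ 2 * N - 1, q (m + 1) = q m := fun m hm => by
    obtain ⟨n, rfl⟩ : ∃ n, m = n + (N - 1) := ⟨m + 1 - N, by omega⟩
    have hlast : ∀ i ∈ Set.Ici (N - 1), i ≤ n + (N - 1) → q i ≤ q (n + (N - 1)) :=
      fun i hi hin => hmono hi (Set.mem_Ici.mpr (by omega)) hin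
    rw [show n + (N - 1) + 1 = n + N by omega, hq n]
    refine le_antisymm (max_le ?_ (max_le ?_ (max_le ?_ ?_))) ?_
    · have : 0 ≤ ∑ j ∈ range (N - 1), q (n + j + 1) :=
        sum_nonneg fun j _ => hnonneg _ (by omega)
      linarith [hnonneg (n + (N - 1)) (by omega)]
    · exact hnonneg _ (by omega)
    · exact hlast n (Set.mem_Ici.mpr (by omega)) (by omega)
    · exact sup'_le _ _ fun k hk =>
        hlast _ (Set.mem_Ici.mpr (by omega)) (by simp only [mem_range] at hk; omega)
    · rw [← hq n]
      exact hle n (N - 1) (by omega)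
  exact ⟨q (2 * N - 1), hnonneg _ (by omega), 2 * N - 1, apply_eq_of_succ_eq hsucc⟩

section

variable (d : ℕ → ℝ) (n : ℕ)

theorem sum_range_mixedDiff (N : ℕ) :
    ∑ j ∈ range N, mixedDiff d (n + j + 1) =
      d (n + N + 3) - d (n + N + 1) - d (n + 3) + d (n + 1) := by
  let f i := d (n + i + 3) - d (n + i + 1)
  calc ∑ j ∈ range N, mixedDiff d (n + j + 1) = ∑ j ∈ range N, (f (j + 1) - f j) :=
        sum_congr rfl fun j _ => by simp only [f, mixedDiff]; ring_nf
    _ = f N - f 0 := sum_range_sub f N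
    _ = _ := by simp only [f]; ring_nf

theorem sum_Icc_one_eq_sum_range (N : ℕ) :
    ∑ j ∈ Icc 1 N, d (n + j) = ∑ j ∈ range N, d (n + j + 1) := by
  rw [← Ico_add_one_right_eq_Icc, sum_Ico_eq_sum_range, Nat.add_sub_cancel]
  ring_nf

end

namespace TropicalMultilinear

variable (d : ℕ → ℝ) (n : ℕ) {N : ℕ}

theorem lhs_eq (hN : 1 ≤ N) :
    d (n + N + 3) + 2 * d (n + N) + ∑ j ∈ range (N - 1), d (n + j + 1) =
      ∑ j ∈ range (N + 2), d (n + j + 1) + mixedDiff d (n + N) := by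
  obtain ⟨M, rfl⟩ := Nat.exists_eq_add_of_le' hN
  simp only [Nat.add_sub_cancel, show M + 1 + 2 = M + 3 by rfl, sum_range_succ, mixedDiff]
  ring_nf

theorem branch_i_eq (hN : 1 ≤ N) :
    d (n + 3) + d (n + N) + ∑ j ∈ range N, d (n + j + 2) =
      ∑ j ∈ range (N + 2), d (n + j + 1) +
        -∑ j ∈ range (N - 1), mixedDiff d (n + j + 1) := by
  obtain ⟨M, rfl⟩ := Nat.exists_eq_add_of_le' hN
  rw [Nat.add_sub_cancel, sum_range_mixedDiff, show M + 1 + 2 = M + 1 + 1 + 1 from rfl,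
    sum_range_succ' _ (M + 1 + 1), sum_range_succ _ (M + 1)]
  ring_nf

theorem branch_iii_eq (N : ℕ) :
    d n + d (n + 3) + ∑ j ∈ range N, d (n + j + 3) =
      ∑ j ∈ range (N + 2), d (n + j + 1) + mixedDiff d n := by
  rw [sum_range_succ', sum_range_succ', mixedDiff]
  ring_nf

theorem branch_iv_eq {k : ℕ} (hk : k + 2 ≤ N) :
    d (n + k + 1) + d (n + k + 4) +
        ∑ j ∈ ((Icc 1 (N + 2)).erase (k + 2)).erase (k + 3), d (n + j) =
      ∑ j ∈ range (N + 2), d (n + j + 1) + mixedDiff d (n + k + 1) := by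
  rw [sum_erase_eq_sub (by simp only [mem_erase, mem_Icc]; omega),
    sum_erase_eq_sub (by simp only [mem_Icc]; omega),
    sum_Icc_one_eq_sum_range, mixedDiff]
  ring_nf

variable {d n}

theorem mixedDiff_recurrence (hN : 2 ≤ N)
    (hd : d (n + N + 3) + 2 * d (n + N) + ∑ j ∈ range (N - 1), d (n + j + 1) =
      max (d (n + 3) + d (n + N) + ∑ j ∈ range N, d (n + j + 2))
        (max (∑ j ∈ range (N + 2), d (n + j + 1))
          (max (d n + d (n + 3) + ∑ j ∈ range N, d (n + j + 3))
            ((range (N - 1)).sup' (nonempty_range_iff.mpr (Nat.sub_ne_zero_of_lt hN))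
              (fun k => d (n + k + 1) + d (n + k + 4) +
                ∑ j ∈ ((Icc 1 (N + 2)).erase (k + 2)).erase (k + 3), d (n + j)))))) :
    mixedDiff d (n + N) = max (-∑ j ∈ range (N - 1), mixedDiff d (n + j + 1))
      (max 0 (max (mixedDiff d n)
        ((range (N - 1)).sup' (nonempty_range_iff.mpr (Nat.sub_ne_zero_of_lt hN))
          fun k => mixedDiff d (n + k + 1)))) := by
  rw [lhs_eq d n (by omega), branch_i_eq d n (by omega), branch_iii_eq,
    sup'_congr _ rfl fun k hk => branch_iv_eq d n (by simp only [mem_range] at hk; omega)] at hd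
  apply add_left_cancel (a := ∑ j ∈ range (N + 2), d (n + j + 1))
  rw [hd, ← max_add_add_left, ← max_add_add_left, ← max_add_add_left, add_zero, add_sup']

end TropicalMultilinear

/-- the solutions of the tropical multilinear equation eventually grow
quadratically: `d_n = (1/4)Cn² + Bn + A + Ā(-1)ⁿ` for all sufficiently large `n`,
with `C ≥ 0`. -/
theorem tropical_multilinear_quadratic_growth (N : ℕ) (hN : 2 ≤ N) (d : ℕ → ℝ)
    (hd : ∀ n : ℕ,
      d (n + N + 3) + 2 * d (n + N) + ∑ j ∈ Finset.range (N - 1), d (n + j + 1) =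
        max (d (n + 3) + d (n + N) + ∑ j ∈ Finset.range N, d (n + j + 2))
          (max (∑ j ∈ Finset.range (N + 2), d (n + j + 1))
            (max (d n + d (n + 3) + ∑ j ∈ Finset.range N, d (n + j + 3))
              ((Finset.range (N - 1)).sup'
                (Finset.nonempty_range_iff.mpr (by omega))
                (fun k => d (n + k + 1) + d (n + k + 4) +
                  ∑ j ∈ ((Finset.Icc 1 (N + 2)).erase (k + 2)).erase (k + 3), d (n + j)))))) :
    ∃ A Abar B C : ℝ, 0 ≤ C ∧ ∃ m : ℕ, ∀ n : ℕ, m ≤ n →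
      d n = (1 / 4) * C * (n : ℝ) ^ 2 + B * (n : ℝ) + A + Abar * (-1 : ℝ) ^ n := by
  obtain ⟨C, hC, m₀, hconst⟩ := exists_eventually_eq_of_tropical_recurrence hN
    fun n => TropicalMultilinear.mixedDiff_recurrence hN (hd n)
  obtain ⟨A, Abar, B, hquad⟩ := exists_eq_quadratic_of_mixedDiff_eq hconst
  exact ⟨A, Abar, B, C, hC, m₀, hquad⟩
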